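/- For n ≥ 5, the circulant graph C_n(1,2) is a W₂ graph if and only if n ∈ {5, 7, 8}. -/

import Mathlib

open SimpleGraph

/-- The circulant graph `C_n(S)` on `ℤ/nℤ`: vertices `i, j` are adjacent iff
`min{|i−j|, n−|i−j|} ∈ S`, i.e. iff `i − j` or `j − i` is congruent mod `n`
to an element of `S ⊆ {1, …, ⌊n/2⌋}`. -/
def circ (n : ℕ) (S : Set ℕ) : SimpleGraph (ZMod n) :=
  SimpleGraph.circulantGraph ((fun s : ℕ => (s : ZMod n)) '' S)

/-- `s` is an independent set of `G`. -/
def IsIndep {V : Type*} (G : SimpleGraph V) (s : Finset V) : Prop :=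
  ∀ ⦃u⦄, u ∈ s → ∀ ⦃w⦄, w ∈ s → ¬ G.Adj u w

/-- The independence number `α(G)`. -/
noncomputable def indepNum {V : Type*} [Fintype V] (G : SimpleGraph V) : ℕ :=
  sSup {k | ∃ s : Finset V, IsIndep G s ∧ s.card = k}

/-- `G` is a W₂ graph: it has at least two vertices and every pair of disjoint
independent sets is contained in a pair of disjoint maximum independent sets. -/
def IsW2 {V : Type*} [Fintype V] (G : SimpleGraph V) : Prop :=
  2 ≤ Fintype.card V ∧
  ∀ A B : Finset V, IsIndep G A → IsIndep G B → Disjoint A B →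
    ∃ A' B' : Finset V, A ⊆ A' ∧ B ⊆ B' ∧ Disjoint A' B' ∧
      IsIndep G A' ∧ IsIndep G B' ∧ A'.card = _root_.indepNum G ∧ B'.card = _root_.indepNum G

/-- The disjoint union of `d` copies of the graph `G`. -/
def copies {V : Type*} (d : ℕ) (G : SimpleGraph V) : SimpleGraph (Fin d × V) where
  Adj p q := p.1 = q.1 ∧ G.Adj p.2 q.2
  symm := ⟨fun p q h => ⟨h.1.symm, h.2.symm⟩⟩
  loopless := ⟨fun p h => G.loopless.irrefl _ h.2⟩

section Aux

/-!
If `S` is independent in `C_n(1,2)`, the translates `S`, `S + 1`, `S + 2` are pairwise disjoint,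
so `α = ⌊n/3⌋` and a maximum independent set leaves exactly `n % 3` vertices outside
`S + {0, 1, 2}`. For `n = 6` or `n ≥ 9` this rigidity lets a small independent set `A` force a
vertex `b ∉ A` into every maximum independent set containing `A` (`A = {0}, b = 3`;
`A = {0, 4}, b = 7`; `A = {0, 6}, b = 3` according to `n % 3`), so `A` and `{b}` have no disjoint
maximum extensions. Conversely `C_5(1,2)` is complete, and for `n = 7, 8` we have `α = 2` while
every vertex has the two non-neighbours `v ± 3`; as there is no independent triple, this suffices
to extend any two disjoint independent sets greedily.
-/

open Finset Pointwise

section General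

variable {V : Type*} {G : SimpleGraph V}

lemma isIndep_singleton (v : V) : IsIndep G {v} := by
  intro u hu w hw
  rw [mem_singleton] at hu hw
  subst hu hw
  exact G.loopless.irrefl _

lemma IsIndep.insert [DecidableEq V] {S : Finset V} (hS : IsIndep G S) {v : V}
    (hv : ∀ u ∈ S, ¬G.Adj v u) : IsIndep G (insert v S) := by
  intro a ha b hb
  rw [mem_insert] at ha hb
  rcases ha with rfl | ha <;> rcases hb with rfl | hb
  exacts [G.loopless.irrefl _, hv b hb, fun h => hv a ha h.symm, hS ha hb]

lemma isIndep_pair [DecidableEq V] {u v : V} (h : ¬G.Adj u v) : IsIndep G {u, v} :=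
  (isIndep_singleton v).insert (by simpa using h)

lemma IsIndep.notMem_of_adj {S : Finset V} (hS : IsIndep G S) {x y : V} (hx : x ∈ S)
    (hxy : G.Adj x y) : y ∉ S :=
  fun hy => hS hx hy hxy

variable [Fintype V]

lemma IsIndep.card_le_indepNum {S : Finset V} (hS : IsIndep G S) : #S ≤ _root_.indepNum G :=
  le_csSup ⟨Fintype.card V, by rintro _ ⟨s, -, rfl⟩; exact card_le_univ s⟩ ⟨S, hS, rfl⟩

lemma exists_subset_singleton_notMem {s t : Finset V} (hs : #s ≤ 1) (hst : Disjoint s t)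
    (ht : #t < Fintype.card V) : ∃ v, s ⊆ {v} ∧ v ∉ t := by
  rcases s.eq_empty_or_nonempty with rfl | ⟨v, hv⟩
  · obtain ⟨v, -, hv⟩ :=
      exists_mem_notMem_of_card_lt_card (s := t) (t := univ) (by simpa using ht)
    exact ⟨v, empty_subset _, hv⟩
  · exact ⟨v, fun w hw => mem_singleton.2 (card_le_one.1 hs w hw v hv), disjoint_left.1 hst hv⟩

lemma not_isW2_of_forced {A : Finset V} (hA : IsIndep G A) {b : V} (hb : b ∉ A)
    (hforced : ∀ S, IsIndep G S → A ⊆ S → #S = _root_.indepNum G → b ∈ S) : ¬IsW2 G := by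
  rintro ⟨-, hW2⟩
  obtain ⟨S, T, hAS, hbT, hST, hS, -, hSmax, -⟩ :=
    hW2 A {b} hA (isIndep_singleton b) (disjoint_singleton_right.2 hb)
  exact disjoint_left.1 hST (hforced S hS hAS hSmax) (hbT (mem_singleton_self b))

theorem isW2_of_indepNum_eq_one [DecidableEq V] (hV : 2 ≤ Fintype.card V)
    (hα : _root_.indepNum G = 1) : IsW2 G := by
  have hle : ∀ {S}, IsIndep G S → #S ≤ 1 := fun hS => hα ▸ hS.card_le_indepNum
  refine ⟨hV, fun A B hA hB hAB => ?_⟩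
  obtain ⟨a, hAa, haB⟩ := exists_subset_singleton_notMem (hle hA) hAB (by linarith [hle hB])
  obtain ⟨b, hBb, hba⟩ := exists_subset_singleton_notMem (hle hB)
    (disjoint_singleton_right.2 haB) (by simp; omega)
  exact ⟨{a}, {b}, hAa, hBb, disjoint_singleton.2 (Ne.symm (by simpa using hba)),
    isIndep_singleton a, isIndep_singleton b, by simp [hα], by simp [hα]⟩

lemma exists_nonadj_notMem_of_indepNum_eq_two [DecidableEq V] (hα : _root_.indepNum G = 2)
    (hnon : ∀ v u, ∃ w, w ≠ v ∧ w ≠ u ∧ ¬G.Adj v w) {A : Finset V} (hA : IsIndep G A) {v : V}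
    (hv : v ∉ A) : ∃ w, w ≠ v ∧ w ∉ A ∧ ¬G.Adj v w := by
  rcases le_or_gt #A 1 with hA₁ | hA₂
  · have : Nonempty V := ⟨v⟩
    obtain ⟨u, hAu⟩ := card_le_one_iff_subset_singleton.1 hA₁
    obtain ⟨w, hwv, hwu, hvw⟩ := hnon v u
    exact ⟨w, hwv, fun hw => hwu (mem_singleton.1 (hAu hw)), hvw⟩
  obtain ⟨x, y, hxy, rfl⟩ := card_eq_two.1 (le_antisymm (hα ▸ hA.card_le_indepNum) hA₂)
  obtain ⟨w, hwv, hwx, hvw⟩ := hnon v x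
  obtain ⟨w', hw'v, hw'y, hvw'⟩ := hnon v y
  by_cases hwy : w = y
  · by_cases hw'x : w' = x
    · rw [hwy] at hvw
      rw [hw'x] at hvw'
      have hvxy : IsIndep G {v, x, y} := hA.insert (by simp [hvw, hvw'])
      have := hα ▸ hvxy.card_le_indepNum
      rw [card_insert_of_notMem hv, card_pair hxy] at this
      omega
    · exact ⟨w', hw'v, by simp [hw'x, hw'y], hvw'⟩
  · exact ⟨w, hwv, by simp [hwx, hwy], hvw⟩

lemma exists_isIndep_superset_card_eq_two [DecidableEq V] (hV : 3 ≤ Fintype.card V)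
    (hα : _root_.indepNum G = 2) (hnon : ∀ v u, ∃ w, w ≠ v ∧ w ≠ u ∧ ¬G.Adj v w)
    {A B : Finset V} (hA : IsIndep G A) (hB : IsIndep G B) (hAB : Disjoint A B) :
    ∃ B', B ⊆ B' ∧ IsIndep G B' ∧ #B' = 2 ∧ Disjoint A B' := by
  rcases le_or_gt #B 1 with hB₁ | hB₂
  · obtain ⟨v, hBv, hvA⟩ := exists_subset_singleton_notMem hB₁ hAB.symm
      (by linarith [hα ▸ hA.card_le_indepNum])
    obtain ⟨w, hwv, hwA, hvw⟩ := exists_nonadj_notMem_of_indepNum_eq_two hα hnon hA hvA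
    exact ⟨{v, w}, hBv.trans (by simp), isIndep_pair hvw, card_pair hwv.symm,
      disjoint_insert_right.2 ⟨hvA, disjoint_singleton_right.2 hwA⟩⟩
  · exact ⟨B, subset_rfl, hB, le_antisymm (hα ▸ hB.card_le_indepNum) hB₂, hAB⟩

theorem isW2_of_indepNum_eq_two [DecidableEq V] (hV : 3 ≤ Fintype.card V)
    (hα : _root_.indepNum G = 2) (hnon : ∀ v u, ∃ w, w ≠ v ∧ w ≠ u ∧ ¬G.Adj v w) : IsW2 G := by
  refine ⟨by omega, fun A B hA hB hAB => ?_⟩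
  obtain ⟨B', hBB', hB', hB'₂, hAB'⟩ :=
    exists_isIndep_superset_card_eq_two hV hα hnon hA hB hAB
  obtain ⟨A', hAA', hA', hA'₂, hB'A'⟩ :=
    exists_isIndep_superset_card_eq_two hV hα hnon hB' hA hAB'.symm
  exact ⟨A', B', hAA', hBB', hB'A'.symm, hA', hB', hA'₂.trans hα.symm, hB'₂.trans hα.symm⟩

end General

section Circulant

variable {n : ℕ}

lemma natCast_ne_natCast_of_lt (a b : ℕ) (hab : a ≠ b) (ha : a < n) (hb : b < n) :
    (a : ZMod n) ≠ b := by
  rw [Ne, ZMod.natCast_eq_natCast_iff', Nat.mod_eq_of_lt ha, Nat.mod_eq_of_lt hb]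
  exact hab

lemma natCast_ne_zero_of_lt {k : ℕ} (hk₀ : 0 < k) (hk : k < n) : (k : ZMod n) ≠ 0 := by
  exact_mod_cast natCast_ne_natCast_of_lt k 0 hk₀.ne' hk (by omega)

lemma circ_adj_iff (hn : 3 ≤ n) {u v : ZMod n} :
    (circ n {1, 2}).Adj u v ↔ u - v = 1 ∨ u - v = 2 ∨ v - u = 1 ∨ v - u = 2 := by
  have h₁ : (1 : ZMod n) ≠ 0 := by exact_mod_cast natCast_ne_zero_of_lt one_pos (by omega)
  have h₂ : (2 : ZMod n) ≠ 0 := by exact_mod_cast natCast_ne_zero_of_lt two_pos (by omega)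
  simp only [circ, circulantGraph_adj, Set.image_insert_eq, Set.image_singleton,
    Set.mem_insert_iff, Set.mem_singleton_iff, Nat.cast_one, Nat.cast_ofNat]
  constructor
  · rintro ⟨-, h⟩
    tauto
  · intro h
    refine ⟨?_, by tauto⟩
    rintro rfl
    simp [h₁.symm, h₂.symm] at h

lemma circ_adj_add_right {S : Set ℕ} {u v d : ZMod n} :
    (circ n S).Adj (u + d) (v + d) ↔ (circ n S).Adj u v :=
  circulantGraph_adj_translate

lemma not_circ_adj_zero_natCast {b : ℕ} (hb₁ : 3 ≤ b) (hb₂ : b + 3 ≤ n) :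
    ¬(circ n {1, 2}).Adj 0 (b : ZMod n) := by
  rw [circ_adj_iff (by omega)]
  rintro (h | h | h | h)
  · exact natCast_ne_zero_of_lt (n := n) (k := b + 1) (by omega) (by omega)
      (by push_cast; linear_combination -h)
  · exact natCast_ne_zero_of_lt (n := n) (k := b + 2) (by omega) (by omega)
      (by push_cast; linear_combination -h)
  · exact natCast_ne_zero_of_lt (n := n) (k := b - 1) (by omega) (by omega)
      (by rw [Nat.cast_sub (by omega)]; push_cast; linear_combination h)
  · exact natCast_ne_zero_of_lt (n := n) (k := b - 2) (by omega) (by omega)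
      (by rw [Nat.cast_sub (by omega)]; push_cast; linear_combination h)

lemma not_circ_adj_natCast {a b : ℕ} (hab : a + 3 ≤ b) (hb : b + 3 ≤ a + n) :
    ¬(circ n {1, 2}).Adj (a : ZMod n) b := by
  have h := not_circ_adj_zero_natCast (n := n) (b := b - a) (by omega) (by omega)
  rwa [← circ_adj_add_right (d := (a : ZMod n)), zero_add, ← Nat.cast_add,
    Nat.sub_add_cancel (by omega)] at h

lemma not_circ_adj_add_three (hn : 6 ≤ n) (v : ZMod n) : ¬(circ n {1, 2}).Adj v (v + 3) := by
  have h := not_circ_adj_natCast (n := n) (a := 0) (b := 3) le_rfl (by omega)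
  rwa [← circ_adj_add_right (d := v), Nat.cast_zero, zero_add, Nat.cast_ofNat, add_comm 3] at h

lemma exists_not_circ_adj (hn : 7 ≤ n) (v u : ZMod n) :
    ∃ w, w ≠ v ∧ w ≠ u ∧ ¬(circ n {1, 2}).Adj v w := by
  have h₃ : (3 : ZMod n) ≠ 0 := by
    exact_mod_cast natCast_ne_zero_of_lt (n := n) (k := 3) (by omega) (by omega)
  have h₆ : (6 : ZMod n) ≠ 0 := by
    exact_mod_cast natCast_ne_zero_of_lt (n := n) (k := 6) (by omega) (by omega)
  by_cases hu : v + 3 = u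
  · refine ⟨v - 3, fun h => h₃ (by linear_combination -h), fun h => h₆ ?_, fun h => ?_⟩
    · linear_combination hu - h
    · exact not_circ_adj_add_three (by omega) (v - 3) (by simpa using h.symm)
  · exact ⟨v + 3, fun h => h₃ (by linear_combination h), hu, not_circ_adj_add_three (by omega) v⟩

lemma card_add_zero_one_two (hn : 3 ≤ n) {S : Finset (ZMod n)} (hS : IsIndep (circ n {1, 2}) S) :
    #(S + {0, 1, 2}) = 3 * #S := by
  have h₁ : (1 : ZMod n) ≠ 0 := by exact_mod_cast natCast_ne_zero_of_lt one_pos (by omega)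
  have h₂ : (2 : ZMod n) ≠ 0 := by exact_mod_cast natCast_ne_zero_of_lt two_pos (by omega)
  have h₁₂ : (1 : ZMod n) ≠ 2 := fun h => h₁ (by linear_combination -h)
  rw [card_add_iff.2 ?_, card_insert_of_notMem (by simp [h₁.symm, h₂.symm]), card_pair h₁₂,
    mul_comm]
  rintro ⟨x, i⟩ ⟨hx, hi⟩ ⟨y, j⟩ ⟨hy, hj⟩ (h : x + i = y + j)
  simp only [mem_coe, mem_insert, mem_singleton] at hx hi hy hj
  by_cases hxy : x = y
  · subst hxy
    rw [add_left_cancel_iff.1 h]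
  refine absurd ((circ_adj_iff hn).2 ?_) (hS hx hy)
  rw [show x - y = j - i by linear_combination h, show y - x = i - j by linear_combination -h]
  rcases hi with rfl | rfl | rfl <;> rcases hj with rfl | rfl | rfl <;>
    first | exact absurd (by linear_combination h) hxy | norm_num

lemma IsIndep.notMem_of_circ_adj (hn : 3 ≤ n) {S : Finset (ZMod n)}
    (hS : IsIndep (circ n {1, 2}) S) {x y : ZMod n} (hx : x ∈ S)
    (hxy : x - y = 1 ∨ x - y = 2 ∨ y - x = 1 ∨ y - x = 2) : y ∉ S :=
  hS.notMem_of_adj hx ((circ_adj_iff hn).2 hxy)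

lemma IsIndep.card_le_div_three [NeZero n] (hn : 3 ≤ n) {S : Finset (ZMod n)}
    (hS : IsIndep (circ n {1, 2}) S) : #S ≤ n / 3 := by
  have := card_le_univ (S + {0, 1, 2})
  rw [card_add_zero_one_two hn hS, ZMod.card] at this
  omega

lemma exists_isIndep_card_eq_div_three [NeZero n] :
    ∃ S : Finset (ZMod n), IsIndep (circ n {1, 2}) S ∧ #S = n / 3 := by
  refine ⟨(range (n / 3)).image fun i => ((3 * i : ℕ) : ZMod n), ?_, ?_⟩
  · simp only [IsIndep, mem_image, mem_range]
    rintro _ ⟨i, hi, rfl⟩ _ ⟨j, hj, rfl⟩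
    rcases lt_trichotomy i j with hij | rfl | hij
    · exact not_circ_adj_natCast (by omega) (by omega)
    · exact (circ n {1, 2}).loopless.irrefl _
    · exact fun h => not_circ_adj_natCast (by omega) (by omega) h.symm
  · rw [card_image_of_injOn, card_range]
    intro i hi j hj h
    simp only [coe_range, Set.mem_Iio] at hi hj
    by_contra hij
    exact natCast_ne_natCast_of_lt (3 * i) (3 * j) (by omega) (by omega) (by omega) h

lemma indepNum_circ [NeZero n] (hn : 3 ≤ n) : _root_.indepNum (circ n {1, 2}) = n / 3 :=
  IsGreatest.csSup_eq ⟨exists_isIndep_card_eq_div_three,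
    by rintro _ ⟨S, hS, rfl⟩; exact hS.card_le_div_three hn⟩

lemma notMem_add_zero_one_two {S : Finset (ZMod n)} {y : ZMod n} (h₀ : y ∉ S) (h₁ : y - 1 ∉ S)
    (h₂ : y - 2 ∉ S) : y ∉ S + {0, 1, 2} := by
  simp only [mem_add, mem_insert, mem_singleton]
  rintro ⟨s, hs, t, (rfl | rfl | rfl), rfl⟩ <;> simp_all

lemma card_le_mod_three [NeZero n] (hn : 3 ≤ n) {S Y : Finset (ZMod n)}
    (hS : IsIndep (circ n {1, 2}) S) (hSmax : #S = n / 3) (hY : Disjoint Y (S + {0, 1, 2})) :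
    #Y ≤ n % 3 := by
  have := card_le_univ (Y ∪ (S + {0, 1, 2}))
  rw [card_union_of_disjoint hY, card_add_zero_one_two hn hS, ZMod.card] at this
  omega

end Circulant

section Forced

variable {n : ℕ} [NeZero n] {S : Finset (ZMod n)}

lemma three_mem_of_zero_mem (hn : 6 ≤ n) (hn₃ : n % 3 = 0) (hS : IsIndep (circ n {1, 2}) S)
    (hSmax : #S = n / 3) (h₀ : 0 ∈ S) : 3 ∈ S := by
  by_contra h₃
  have hY := card_le_mod_three (Y := {3}) (by omega) hS hSmax <| disjoint_singleton_left.2 <|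
    notMem_add_zero_one_two h₃ (hS.notMem_of_circ_adj (by omega) h₀ (by norm_num))
      (hS.notMem_of_circ_adj (by omega) h₀ (by norm_num))
  rw [card_singleton] at hY
  omega

lemma seven_mem_of_zero_mem_of_four_mem (hn : 10 ≤ n) (hn₃ : n % 3 = 1)
    (hS : IsIndep (circ n {1, 2}) S) (hSmax : #S = n / 3) (h₀ : 0 ∈ S) (h₄ : 4 ∈ S) :
    7 ∈ S := by
  by_contra h₇
  have h₃₇ : (3 : ZMod n) ≠ 7 := by
    exact_mod_cast natCast_ne_natCast_of_lt (n := n) 3 7 (by norm_num) (by omega) (by omega)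
  have hY := card_le_mod_three (Y := {3, 7}) (by omega) hS hSmax <| by
    simp only [disjoint_insert_left, disjoint_singleton_left]
    refine ⟨notMem_add_zero_one_two ?_ ?_ ?_, notMem_add_zero_one_two h₇ ?_ ?_⟩
    · exact hS.notMem_of_circ_adj (by omega) h₄ (by norm_num)
    · exact hS.notMem_of_circ_adj (by omega) h₀ (by norm_num)
    · exact hS.notMem_of_circ_adj (by omega) h₀ (by norm_num)
    · exact hS.notMem_of_circ_adj (by omega) h₄ (by norm_num)
    · exact hS.notMem_of_circ_adj (by omega) h₄ (by norm_num)
  rw [card_pair h₃₇] at hY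
  omega

lemma three_mem_of_zero_mem_of_six_mem (hn : 11 ≤ n) (hn₃ : n % 3 = 2)
    (hS : IsIndep (circ n {1, 2}) S) (hSmax : #S = n / 3) (h₀ : 0 ∈ S) (h₆ : 6 ∈ S) :
    3 ∈ S := by
  by_contra h₃
  have h₃₄ : (3 : ZMod n) ≠ 4 := by
    exact_mod_cast natCast_ne_natCast_of_lt (n := n) 3 4 (by norm_num) (by omega) (by omega)
  have h₃₅ : (3 : ZMod n) ≠ 5 := by
    exact_mod_cast natCast_ne_natCast_of_lt (n := n) 3 5 (by norm_num) (by omega) (by omega)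
  have h₄₅ : (4 : ZMod n) ≠ 5 := by
    exact_mod_cast natCast_ne_natCast_of_lt (n := n) 4 5 (by norm_num) (by omega) (by omega)
  have hY := card_le_mod_three (Y := {3, 4, 5}) (by omega) hS hSmax <| by
    simp only [disjoint_insert_left, disjoint_singleton_left]
    refine ⟨notMem_add_zero_one_two h₃ ?_ ?_, notMem_add_zero_one_two ?_ ?_ ?_,
      notMem_add_zero_one_two ?_ ?_ ?_⟩
    · exact hS.notMem_of_circ_adj (by omega) h₀ (by norm_num)
    · exact hS.notMem_of_circ_adj (by omega) h₀ (by norm_num)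
    · exact hS.notMem_of_circ_adj (by omega) h₆ (by norm_num)
    · norm_num [h₃]
    · exact hS.notMem_of_circ_adj (by omega) h₀ (by norm_num)
    · exact hS.notMem_of_circ_adj (by omega) h₆ (by norm_num)
    · exact hS.notMem_of_circ_adj (by omega) h₆ (by norm_num)
    · norm_num [h₃]
  rw [card_insert_of_notMem (by simp [h₃₄, h₃₅]), card_pair h₄₅] at hY
  omega

lemma not_isW2_circ (hn : n = 6 ∨ 9 ≤ n) : ¬IsW2 (circ n {1, 2}) := by
  have hα := indepNum_circ (n := n) (by omega)
  rcases (by omega : n % 3 = 0 ∨ n % 3 = 1 ∨ n % 3 = 2) with hn₃ | hn₃ | hn₃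
  · refine not_isW2_of_forced (isIndep_singleton 0) (b := 3) ?_ fun S hS hA hSmax =>
      three_mem_of_zero_mem (by omega) hn₃ hS (hSmax.trans hα) (hA (mem_singleton_self 0))
    have h₃₀ : (3 : ZMod n) ≠ 0 := by
      exact_mod_cast natCast_ne_natCast_of_lt (n := n) 3 0 (by norm_num) (by omega) (by omega)
    simp [h₃₀]
  · have h₀₄ : ¬(circ n {1, 2}).Adj 0 4 := by
      exact_mod_cast not_circ_adj_natCast (n := n) (a := 0) (b := 4) (by norm_num) (by omega)
    refine not_isW2_of_forced (isIndep_pair h₀₄) (b := 7) ?_ fun S hS hA hSmax =>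
      seven_mem_of_zero_mem_of_four_mem (by omega) hn₃ hS (hSmax.trans hα) (hA (by simp))
        (hA (by simp))
    have h₇₀ : (7 : ZMod n) ≠ 0 := by
      exact_mod_cast natCast_ne_natCast_of_lt (n := n) 7 0 (by norm_num) (by omega) (by omega)
    have h₇₄ : (7 : ZMod n) ≠ 4 := by
      exact_mod_cast natCast_ne_natCast_of_lt (n := n) 7 4 (by norm_num) (by omega) (by omega)
    simp [h₇₀, h₇₄]
  · have h₀₆ : ¬(circ n {1, 2}).Adj 0 6 := by
      exact_mod_cast not_circ_adj_natCast (n := n) (a := 0) (b := 6) (by norm_num) (by omega)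
    refine not_isW2_of_forced (isIndep_pair h₀₆) (b := 3) ?_ fun S hS hA hSmax =>
      three_mem_of_zero_mem_of_six_mem (by omega) hn₃ hS (hSmax.trans hα) (hA (by simp))
        (hA (by simp))
    have h₃₀ : (3 : ZMod n) ≠ 0 := by
      exact_mod_cast natCast_ne_natCast_of_lt (n := n) 3 0 (by norm_num) (by omega) (by omega)
    have h₃₆ : (3 : ZMod n) ≠ 6 := by
      exact_mod_cast natCast_ne_natCast_of_lt (n := n) 3 6 (by norm_num) (by omega) (by omega)
    simp [h₃₀, h₃₆]

end Forced

theorem stmt_3 (n : ℕ) [NeZero n] (hn : 5 ≤ n) :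
    IsW2 (circ n {1, 2}) ↔ n = 5 ∨ n = 7 ∨ n = 8 := by
  constructor
  · intro hW2
    by_contra h
    exact not_isW2_circ (by omega) hW2
  · rintro (rfl | rfl | rfl)
    · exact isW2_of_indepNum_eq_one (by simp) (indepNum_circ (by norm_num))
    · exact isW2_of_indepNum_eq_two (by simp) (indepNum_circ (by norm_num))
        (exists_not_circ_adj le_rfl)
    · exact isW2_of_indepNum_eq_two (by simp) (indepNum_circ (by norm_num))
        (exists_not_circ_adj (by norm_num))
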